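/- arXiv:2212.12265 — 2 statements merged into one kernel-verified Lean document; each statement's English description precedes it below -/
import Mathlib

section
/- Let φ : C1 → C2 be an isometry of convolutional codes and let δ1 be the memory of C1. If φ is a δ1-equivalence, then φ is an equivalence. -/
open Polynomial

namespace ConvCode

variable {F : Type*} [Field F] [Fintype F] {n k : ℕ}

/-- Weight of a polynomial vector: total number of nonzero coefficients. -/
noncomputable def wtv (c : Fin n → Polynomial F) : ℕ := ∑ ℓ, (c ℓ).support.card

/-- Truncation of a polynomial, keeping the coefficients of degrees `h` through `j`. -/
noncomputable def truncp (h j : ℕ) (p : Polynomial F) : Polynomial F :=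
  ∑ i ∈ Finset.Icc h j, Polynomial.C (p.coeff i) * Polynomial.X ^ i

/-- Truncation `c_{[h,j]}` of a polynomial vector. -/
noncomputable def truncv (h j : ℕ) (c : Fin n → Polynomial F) : Fin n → Polynomial F :=
  fun ℓ => truncp h j (c ℓ)

/-- Degree of a polynomial vector: the largest `i` such that `c[i] ≠ 0`. -/
def degv (c : Fin n → Polynomial F) : ℕ := Finset.univ.sup fun ℓ => (c ℓ).natDegree

/-- `φ` is a `j`-equivalence: it preserves weights of `j`-th truncations. -/
def IsJEquiv (C1 C2 : Submodule (Polynomial F) (Fin n → Polynomial F))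
    (φ : C1 ≃ₗ[Polynomial F] C2) (j : ℕ) : Prop :=
  ∀ c : C1, wtv (truncv 0 j (c : Fin n → Polynomial F)) =
    wtv (truncv 0 j ((φ c : C2) : Fin n → Polynomial F))

/-- `φ` is an equivalence: it is a `j`-equivalence for every `j`. -/
def IsEquiv (C1 C2 : Submodule (Polynomial F) (Fin n → Polynomial F))
    (φ : C1 ≃ₗ[Polynomial F] C2) : Prop := ∀ j : ℕ, IsJEquiv C1 C2 φ j

/-- `φ` is an isometry: it preserves weights. -/
def IsIsometry (C1 C2 : Submodule (Polynomial F) (Fin n → Polynomial F))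
    (φ : C1 ≃ₗ[Polynomial F] C2) : Prop :=
  ∀ c : C1, wtv (c : Fin n → Polynomial F) = wtv ((φ c : C2) : Fin n → Polynomial F)

/-- `G` is a generator matrix of `C`: its rows form an `F[x]`-basis of `C`. -/
def IsGenMat (C : Submodule (Polynomial F) (Fin n → Polynomial F))
    (G : Matrix (Fin k) (Fin n) (Polynomial F)) : Prop :=
  LinearIndependent (Polynomial F) (fun i => G i) ∧
    Submodule.span (Polynomial F) (Set.range fun i => G i) = C

/-- `G` is row reduced: its leading row coefficient matrix has full rank. -/
def RowReduced (G : Matrix (Fin k) (Fin n) (Polynomial F)) : Prop :=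
  LinearIndependent F (fun i => fun ℓ => (G i ℓ).coeff (degv (G i)))

/-- `C` is noncatastrophic: it has a generator matrix with a polynomial right inverse
whose constant term has rank `k`. -/
def Noncatastrophic (C : Submodule (Polynomial F) (Fin n → Polynomial F)) (k : ℕ) : Prop :=
  ∃ G : Matrix (Fin k) (Fin n) (Polynomial F), IsGenMat C G ∧
    (∃ H : Matrix (Fin n) (Fin k) (Polynomial F), G * H = 1) ∧
    LinearIndependent F (fun i => fun ℓ => (G i ℓ).eval 0)

/-- Joint support of a family of polynomial vectors: the pairs `(ℓ, i)` such that the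
coefficient of `x^i` in the `ℓ`-th coordinate of some member is nonzero. -/
def gsupp {r : ℕ} (d : Fin r → Fin n → Polynomial F) : Set (Fin n × ℕ) :=
  { q | ∃ s, ((d s) q.1).coeff q.2 ≠ 0 }

/-- The `(r,j)`-generalized column distance of the code generated by `G`. -/
noncomputable def gcdJ (G : Matrix (Fin k) (Fin n) (Polynomial F)) (r j : ℕ) : ℕ :=
  sInf { m | ∃ p : Fin r → Fin k → Polynomial F,
    LinearIndependent F (fun s => fun l => (p s l).eval 0) ∧
    m = (gsupp fun s => truncv 0 j (Matrix.vecMul (p s) G)).ncard }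

/-- The `r`-generalized column distance: the limit as `j → ∞` of the `(r,j)`-generalized
column distances. -/
noncomputable def gcdLim (G : Matrix (Fin k) (Fin n) (Polynomial F)) (r : ℕ) : ℕ :=
  Filter.limsup (fun j => gcdJ G r j) Filter.atTop

/-- Evaluation at `0`, as an `F`-linear map `F[x]^n → F^n`. -/
noncomputable def ev0 : (Fin n → Polynomial F) →ₗ[F] (Fin n → F) :=
  LinearMap.pi fun ℓ => (Polynomial.aeval (0 : F)).toLinearMap.comp (LinearMap.proj ℓ)

/-- `C[0] = {c(0) : c ∈ C} ⊆ F^n`. -/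
noncomputable def evalZero (C : Submodule (Polynomial F) (Fin n → Polynomial F)) :
    Submodule F (Fin n → F) := (C.restrictScalars F).map ev0

/-- The `r`-th generalized Hamming weight of a block code `L ⊆ F^n`. -/
noncomputable def hammingGW (L : Submodule F (Fin n → F)) (r : ℕ) : ℕ :=
  sInf { m | ∃ V : Submodule F (Fin n → F), V ≤ L ∧ Module.finrank F V = r ∧
    m = { ℓ : Fin n | ∃ v ∈ V, v ℓ ≠ 0 }.ncard }

/-- The `r`-th generalized weight of a convolutional code. -/
noncomputable def genWt (C : Submodule (Polynomial F) (Fin n → Polynomial F)) (r : ℕ) : ℕ :=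
  sInf { m | ∃ d : Fin r → Fin n → Polynomial F, (∀ s, d s ∈ C) ∧
    (r : Cardinal) ≤ Module.rank (Polynomial F)
      ↥(Submodule.span (Polynomial F) (Set.range d)) ∧
    m = (gsupp d).ncard }

/-- The free distance of a convolutional code. -/
noncomputable def dfree (C : Submodule (Polynomial F) (Fin n → Polynomial F)) : ℕ :=
  sInf { m | ∃ c : Fin n → Polynomial F, c ∈ C ∧ c ≠ 0 ∧ m = wtv c }

end ConvCode

open ConvCode

/-!
Write `tailWt j c` for the weight of the coefficients of `c` in degrees above `j`. Since `φ`
preserves weights, it is a `j`-equivalence exactly when it preserves `tailWt j`.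

For `j ≤ δ1`, apply the `δ1`-equivalence to `x^(δ1 - j) c`. Above `δ1`, induct: for
`j = m + δ1`, dividing the coefficients of `c` along the rows of `G` by `x^(m+1)` gives
`c = a + x^(m+1) b` with `a, b ∈ C1` and `deg a ≤ j`. By the `j`-equivalence `φ a` also has
degree `≤ j`, so the tails of `c` and `φ c` above `j + 1` are the shifted tails of `b` and
`φ b` above `δ1`, which agree by the `δ1`-equivalence.
-/

theorem Polynomial.support_X_pow_mul {R : Type*} [Semiring R] (p : R[X]) (m : ℕ) :
    (X ^ m * p).support = p.support.map (addRightEmbedding m) := by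
  ext i
  simp only [mem_support_iff, Finset.mem_map, coeff_X_pow_mul', addRightEmbedding_apply]
  constructor
  · intro h
    split_ifs at h with hm
    · exact ⟨i - m, h, Nat.sub_add_cancel hm⟩
    · exact (h rfl).elim
  · rintro ⟨i, hi, rfl⟩
    simpa using hi

theorem Polynomial.card_filter_support_X_pow_mul {R : Type*} [Semiring R] (P : ℕ → Prop)
    [DecidablePred P] (p : R[X]) (m : ℕ) :
    ((X ^ m * p).support.filter P).card = (p.support.filter fun i => P (i + m)).card := by
  rw [support_X_pow_mul, Finset.filter_map, Finset.card_map]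
  rfl

namespace ConvCode

variable {F : Type*} [Field F] {n : ℕ}

theorem degv_le_iff {c : Fin n → F[X]} {j : ℕ} : degv c ≤ j ↔ ∀ ℓ, (c ℓ).natDegree ≤ j := by
  simp [degv, Finset.sup_le_iff]

theorem coeff_truncp (p : F[X]) (j i : ℕ) :
    (truncp 0 j p).coeff i = if i ≤ j then p.coeff i else 0 := by
  simp [truncp, coeff_C_mul, coeff_X_pow]

theorem support_truncp (p : F[X]) (j : ℕ) :
    (truncp 0 j p).support = p.support.filter (· ≤ j) := by
  ext i
  by_cases h : i ≤ j <;> simp [coeff_truncp, h]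

theorem wtv_truncv (c : Fin n → F[X]) (j : ℕ) :
    wtv (truncv 0 j c) = ∑ ℓ, ((c ℓ).support.filter (· ≤ j)).card := by
  simp [wtv, truncv, support_truncp]

theorem wtv_truncv_X_pow_smul (c : Fin n → F[X]) (m j : ℕ) :
    wtv (truncv 0 (m + j) ((X : F[X]) ^ m • c)) = wtv (truncv 0 j c) := by
  simp only [wtv_truncv, Pi.smul_apply, smul_eq_mul, card_filter_support_X_pow_mul]
  simp [add_comm m]

noncomputable def tailWt (j : ℕ) (c : Fin n → F[X]) : ℕ :=
  ∑ ℓ, ((c ℓ).support.filter (j < ·)).card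

theorem wtv_eq_wtv_truncv_add_tailWt (c : Fin n → F[X]) (j : ℕ) :
    wtv c = wtv (truncv 0 j c) + tailWt j c := by
  rw [wtv_truncv, tailWt, wtv, ← Finset.sum_add_distrib]
  refine Finset.sum_congr rfl fun ℓ _ => ?_
  simpa only [not_le] using (Finset.card_filter_add_card_filter_not (· ≤ j)).symm

theorem tailWt_eq_zero_iff {c : Fin n → F[X]} {j : ℕ} : tailWt j c = 0 ↔ degv c ≤ j := by
  simp only [tailWt, Finset.sum_eq_zero_iff, Finset.mem_univ, true_implies, Finset.card_eq_zero,
    Finset.filter_eq_empty_iff, mem_support_iff, degv_le_iff, natDegree_le_iff_coeff_eq_zero]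
  exact forall_congr' fun ℓ => ⟨fun h N hN => not_not.1 fun hN' => h hN' hN,
    fun h N hN hjN => hN (h N hjN)⟩

theorem tailWt_add_of_degv_le {a : Fin n → F[X]} {j : ℕ} (ha : degv a ≤ j) (b : Fin n → F[X]) :
    tailWt j (a + b) = tailWt j b := by
  rw [degv_le_iff] at ha
  refine Finset.sum_congr rfl fun ℓ _ => congrArg Finset.card ?_
  ext i
  simp only [Finset.mem_filter, mem_support_iff, Pi.add_apply, coeff_add]
  constructor <;> rintro ⟨hi, hji⟩ <;>
    simp_all [coeff_eq_zero_of_natDegree_lt ((ha ℓ).trans_lt hji)]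

theorem tailWt_X_pow_smul (c : Fin n → F[X]) (m j : ℕ) :
    tailWt (m + j) ((X : F[X]) ^ m • c) = tailWt j c := by
  simp only [tailWt, Pi.smul_apply, smul_eq_mul, card_filter_support_X_pow_mul]
  simp [add_comm m]

theorem exists_eq_add_X_pow_smul {k : ℕ} {C : Submodule F[X] (Fin n → F[X])}
    {G : Matrix (Fin k) (Fin n) F[X]} (hGC : Submodule.span F[X] (Set.range fun i => G i) = C)
    {δ : ℕ} (hG : ∀ i, degv (G i) ≤ δ) (c : C) (m : ℕ) :
    ∃ a b : C, degv (a : Fin n → F[X]) ≤ m + δ ∧ c = a + (X : F[X]) ^ (m + 1) • b := by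
  have hmem : ∀ q : Fin k → F[X], ∑ i, q i • G i ∈ C := fun q => by
    rw [← hGC]
    exact Submodule.sum_mem _ fun i _ => Submodule.smul_mem _ _ (Submodule.subset_span ⟨i, rfl⟩)
  have hc : (c : Fin n → F[X]) ∈ Submodule.span F[X] (Set.range fun i => G i) := by
    rw [hGC]
    exact c.2
  obtain ⟨p, hp⟩ := (Submodule.mem_span_range_iff_exists_fun F[X]).1 hc
  refine ⟨⟨_, hmem fun i => p i %ₘ X ^ (m + 1)⟩, ⟨_, hmem fun i => p i /ₘ X ^ (m + 1)⟩, ?_, ?_⟩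
  · refine degv_le_iff.2 fun ℓ => ?_
    simp only [Finset.sum_apply, Pi.smul_apply, smul_eq_mul]
    refine natDegree_sum_le_of_forall_le _ _ fun i _ => natDegree_mul_le.trans (add_le_add ?_ ?_)
    · simpa using natDegree_modByMonic_lt (p i) (monic_X_pow (m + 1))
        fun h => by simpa using congrArg natDegree h
    · exact degv_le_iff.1 (hG i) ℓ
  · ext1
    simp only [Submodule.coe_add, Submodule.coe_smul, Finset.smul_sum, smul_smul,
      ← Finset.sum_add_distrib, ← add_smul, modByMonic_add_div, hp]

section Equivalences

variable {C1 C2 : Submodule F[X] (Fin n → F[X])} {φ : C1 ≃ₗ[F[X]] C2}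

theorem IsJEquiv.of_add {m j : ℕ} (h : IsJEquiv C1 C2 φ (m + j)) : IsJEquiv C1 C2 φ j :=
  fun c => by
    simpa only [map_smul, Submodule.coe_smul, wtv_truncv_X_pow_smul] using h ((X : F[X]) ^ m • c)

theorem IsIsometry.isJEquiv_iff_tailWt_eq (hiso : IsIsometry C1 C2 φ) {j : ℕ} :
    IsJEquiv C1 C2 φ j ↔
      ∀ c : C1, tailWt j (c : Fin n → F[X]) = tailWt j (φ c : Fin n → F[X]) :=
  forall_congr' fun c => by
    have := wtv_eq_wtv_truncv_add_tailWt (c : Fin n → F[X]) j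
    have := wtv_eq_wtv_truncv_add_tailWt (φ c : Fin n → F[X]) j
    have := hiso c
    omega

theorem IsJEquiv.degv_map_le (hiso : IsIsometry C1 C2 φ) {j : ℕ} (h : IsJEquiv C1 C2 φ j)
    {c : C1} (hc : degv (c : Fin n → F[X]) ≤ j) : degv (φ c : Fin n → F[X]) ≤ j := by
  rw [← tailWt_eq_zero_iff] at hc ⊢
  rwa [← (hiso.isJEquiv_iff_tailWt_eq.1 h) c]

theorem IsJEquiv.succ_add (hiso : IsIsometry C1 C2 φ) {δ m : ℕ} (hδ : IsJEquiv C1 C2 φ δ)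
    (hm : IsJEquiv C1 C2 φ (m + δ))
    (hdecomp : ∀ c : C1, ∃ a b : C1,
      degv (a : Fin n → F[X]) ≤ m + δ ∧ c = a + (X : F[X]) ^ (m + 1) • b) :
    IsJEquiv C1 C2 φ (m + 1 + δ) := by
  have htail : ∀ a b : Fin n → F[X], degv a ≤ m + δ →
      tailWt (m + 1 + δ) (a + (X : F[X]) ^ (m + 1) • b) = tailWt δ b := fun a b ha => by
    rw [tailWt_add_of_degv_le (by omega), tailWt_X_pow_smul]
  refine hiso.isJEquiv_iff_tailWt_eq.2 fun c => ?_
  obtain ⟨a, b, ha, rfl⟩ := hdecomp c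
  rw [map_add, map_smul]
  simp only [Submodule.coe_add, Submodule.coe_smul]
  rw [htail _ _ ha, htail _ _ (hm.degv_map_le hiso ha), hiso.isJEquiv_iff_tailWt_eq.1 hδ b]

end Equivalences

end ConvCode

theorem isometry_memory_equiv_general {F : Type*} [Field F] {n k : ℕ}
    (C1 C2 : Submodule (Polynomial F) (Fin n → Polynomial F))
    (φ : C1 ≃ₗ[Polynomial F] C2) (hiso : IsIsometry C1 C2 φ)
    (G : Matrix (Fin k) (Fin n) (Polynomial F)) (hG : IsGenMat C1 G)
    (δ1 : ℕ) (hδ1 : δ1 = Finset.univ.sup fun i => degv (G i))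
    (hφ : IsJEquiv C1 C2 φ δ1) :
    IsEquiv C1 C2 φ := by
  have hGδ : ∀ i, degv (G i) ≤ δ1 := fun i =>
    hδ1 ▸ Finset.le_sup (f := fun i => degv (G i)) (Finset.mem_univ i)
  have hbeyond : ∀ m, IsJEquiv C1 C2 φ (m + δ1) := by
    intro m
    induction m with
    | zero => rwa [zero_add]
    | succ m ih => exact hφ.succ_add hiso ih fun c => exists_eq_add_X_pow_smul hG.2 hGδ c m
  intro j
  rcases le_total j δ1 with hj | hj
  · obtain ⟨m, rfl⟩ := Nat.exists_eq_add_of_le' hj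
    exact hφ.of_add
  · obtain ⟨m, rfl⟩ := Nat.exists_eq_add_of_le' hj
    exact hbeyond m

/-- an isometry which is a `δ1`-equivalence, where `δ1` is the memory of `C1`
(the maximum row degree of a row-reduced generator matrix of `C1`), is an equivalence. -/
theorem isometry_memory_equiv {F : Type*} [Field F] [Fintype F] {n k : ℕ}
    (C1 C2 : Submodule (Polynomial F) (Fin n → Polynomial F))
    (φ : C1 ≃ₗ[Polynomial F] C2) (hiso : IsIsometry C1 C2 φ)
    (G : Matrix (Fin k) (Fin n) (Polynomial F)) (hG : IsGenMat C1 G) (hRR : RowReduced G)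
    (δ1 : ℕ) (hδ1 : δ1 = Finset.univ.sup fun i => degv (G i))
    (hφ : IsJEquiv C1 C2 φ δ1) :
    IsEquiv C1 C2 φ :=
  isometry_memory_equiv_general C1 C2 φ hiso G hG δ1 hδ1 hφ
end

section
/- Let C be a convolutional code in F[x]^n of rank k. Then the r-generalized column distances are strictly increasing in r: d^r(C) < d^{r+1}(C) for all 1 ≤ r < k. -/
open Polynomial

/-!
Let `Δ ≠ 0` be a maximal minor of `G`, on the columns `S`. If `x^(j+1)` divides every entry of
`p G` while `p(0) ≠ 0`, then `Δ • p = (p G)_S · adj` forces `x^(j+1) ∣ Δ`; so for `j ≥ deg Δ`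
every codeword `p G` with `p(0) ≠ 0` has a nonzero coefficient in the window `[0, j]`.
Take an optimal `(r+1)`-family for `d_j^(r+1)`, such a coefficient position `q₀` of one of its
members, and a member `p s₀` whose `q₀`-coefficient is nonzero. Subtracting from the other
members suitable scalar multiples of `p s₀` clears position `q₀` and keeps the constant terms
independent, so it yields an admissible `r`-family whose window support misses `q₀`:
`d_j^r < d_j^(r+1)`. Both sequences are monotone and bounded in `j`, hence eventually equal to
their limits.
-/

theorem Matrix.exists_submatrix_det_ne_zero {R m ι : Type*} [CommRing R] [IsDomain R]
    [Fintype m] [DecidableEq m] [Fintype ι] {G : Matrix m ι R} (hG : LinearIndependent R G.row) :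
    ∃ S : m → ι, (G.submatrix id S).det ≠ 0 := by
  let K := FractionRing R
  let Gk := G.map (algebraMap R K)
  have hGk : LinearIndependent K Gk.row := by
    rw [← LinearIndependent.iff_fractionRing R K]
    refine hG.map' ((Algebra.linearMap R K).compLeft ι) (LinearMap.ker_eq_bot.2 ?_)
    exact fun u v huv => funext fun i => IsFractionRing.injective R K (congrFun huv i)
  obtain ⟨κ, a, -, hspan, hli⟩ := exists_linearIndependent' K Gk.col
  have : Fintype κ := @Fintype.ofFinite _ hli.finite
  have hcard : Fintype.card m = Fintype.card κ := by
    rw [← hGk.rank_matrix, Matrix.rank_eq_finrank_span_cols, ← hspan, finrank_span_eq_card hli]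
  let e := Fintype.equivOfCardEq hcard
  refine ⟨a ∘ e, fun hdet => ?_⟩
  have hunit : IsUnit (Gk.submatrix id (a ∘ e)) := by
    rw [← Matrix.linearIndependent_cols_iff_isUnit]
    exact hli.comp e e.injective
  refine ((Matrix.isUnit_iff_isUnit_det _).1 hunit).ne_zero ?_
  rw [show Gk.submatrix id (a ∘ e) = (algebraMap R K).mapMatrix (G.submatrix id (a ∘ e)) from rfl,
    ← RingHom.map_det, hdet, map_zero]

theorem LinearIndependent.exists_comp_mem_span_inf_ker {K M N : Type*} [Field K] [AddCommGroup M]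
    [Module K M] [AddCommGroup N] [Module K N] (f : M →ₗ[K] N) (φ : M →ₗ[K] K) {r : ℕ}
    {p : Fin (r + 1) → M} (hp : LinearIndependent K (f ∘ p)) {s₀ : Fin (r + 1)}
    (hs₀ : φ (p s₀) ≠ 0) :
    ∃ p' : Fin r → M, LinearIndependent K (f ∘ p') ∧
      ∀ s, p' s ∈ Submodule.span K (Set.range p) ⊓ LinearMap.ker φ := by
  let c := Function.update (fun s => -(φ (p s) / φ (p s₀))) s₀ 0
  let w := p + (c · • p s₀)
  have hw : LinearIndependent K (f ∘ w) := by
    have : f ∘ w = f ∘ p + (c · • (f ∘ p) s₀) := by ext s; simp [w]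
    rwa [this, linearIndependent_add_smul_iff (c := c) (Function.update_self _ _ _)]
  refine ⟨w ∘ s₀.succAbove, hw.comp _ Fin.succAbove_right_injective, fun s => ⟨?_, ?_⟩⟩
  · exact add_mem (Submodule.subset_span ⟨_, rfl⟩)
      (Submodule.smul_mem _ _ (Submodule.subset_span ⟨_, rfl⟩))
  · simp [w, c, Fin.succAbove_ne, hs₀]

namespace ConvCode

open Matrix Filter

variable {F : Type*} [Field F] {n k : ℕ}

@[simp]
theorem ev0_apply (c : Fin n → F[X]) (ℓ : Fin n) : ev0 c ℓ = (c ℓ).eval 0 := rfl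

theorem coeff_truncp_zero (j : ℕ) (p : F[X]) (i : ℕ) :
    (truncp 0 j p).coeff i = if i ≤ j then p.coeff i else 0 := by
  simp [truncp, coeff_C_mul, coeff_X_pow]

theorem truncv_zero_eq_zero_iff {j : ℕ} {c : Fin n → F[X]} :
    truncv 0 j c = 0 ↔ ∀ ℓ, X ^ (j + 1) ∣ c ℓ := by
  simp only [funext_iff, Polynomial.ext_iff, X_pow_dvd_iff, truncv, coeff_truncp_zero,
    Pi.zero_apply, coeff_zero, Nat.lt_succ_iff]
  exact forall_congr' fun ℓ => ⟨fun h i hi => by simpa [hi] using h i,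
    fun h i => by split_ifs with hi <;> simp [h i, hi]⟩

theorem mem_gsupp_truncv {r j : ℕ} {d : Fin r → Fin n → F[X]} {q : Fin n × ℕ} :
    q ∈ gsupp (fun s => truncv 0 j (d s)) ↔ q.2 ≤ j ∧ q ∈ gsupp d := by
  simp only [gsupp, truncv, Set.mem_ofPred_eq, coeff_truncp_zero]
  by_cases h : q.2 ≤ j <;> simp [h]

theorem gsupp_truncv_mono {r : ℕ} (d : Fin r → Fin n → F[X]) :
    Monotone fun j => gsupp fun s => truncv 0 j (d s) := fun _ _ hjj _ hq =>
  have hq' := mem_gsupp_truncv.1 hq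
  mem_gsupp_truncv.2 ⟨hq'.1.trans hjj, hq'.2⟩

theorem gsupp_truncv_subset {r : ℕ} (d : Fin r → Fin n → F[X]) (j : ℕ) :
    (gsupp fun s => truncv 0 j (d s)) ⊆ gsupp d := fun _ hq =>
  (mem_gsupp_truncv.1 hq).2

theorem gsupp_finite {r : ℕ} (d : Fin r → Fin n → F[X]) : (gsupp d).Finite := by
  refine (Set.finite_iUnion fun s => Set.finite_iUnion fun ℓ =>
    (Set.finite_singleton ℓ).prod (d s ℓ).support.finite_toSet).subset ?_
  rintro ⟨ℓ, i⟩ ⟨s, hs⟩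
  exact Set.mem_iUnion.2 ⟨s, Set.mem_iUnion.2 ⟨ℓ, rfl, by simpa using hs⟩⟩

theorem X_pow_dvd_det_of_dvd_vecMul {j : ℕ} {G : Matrix (Fin k) (Fin n) F[X]}
    (S : Fin k → Fin n) {p : Fin k → F[X]} (hp : ev0 p ≠ 0)
    (hdvd : ∀ ℓ, X ^ (j + 1) ∣ (p ᵥ* G) ℓ) : X ^ (j + 1) ∣ (G.submatrix id S).det := by
  set A := G.submatrix id S
  obtain ⟨l, hl⟩ := Function.ne_iff.1 hp
  have hadj : A.det • p = ((p ᵥ* G) ∘ S) ᵥ* A.adjugate := by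
    have hpA : p ᵥ* A = (p ᵥ* G) ∘ S := submatrix_vecMul_equiv G p (Equiv.refl _) S
    rw [← hpA, vecMul_vecMul, mul_adjugate, vecMul_smul, vecMul_one]
  have hcop : IsCoprime (X ^ (j + 1) : F[X]) (p l) := by
    refine IsCoprime.pow_left ?_
    rw [irreducible_X.coprime_iff_not_dvd, X_dvd_iff, coeff_zero_eq_eval_zero]
    simpa using hl
  refine hcop.dvd_of_dvd_mul_right ?_
  rw [← smul_eq_mul, ← Pi.smul_apply, hadj, vecMul, dotProduct]
  exact Finset.dvd_sum fun i _ => (hdvd (S i)).mul_right _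

theorem exists_truncv_vecMul_ne_zero {G : Matrix (Fin k) (Fin n) F[X]}
    (hG : LinearIndependent F[X] G.row) :
    ∃ J, ∀ j, J ≤ j → ∀ p : Fin k → F[X], ev0 p ≠ 0 → truncv 0 j (p ᵥ* G) ≠ 0 := by
  obtain ⟨S, hS⟩ := exists_submatrix_det_ne_zero hG
  refine ⟨(G.submatrix id S).det.natDegree, fun j hj p hp htr => ?_⟩
  have := natDegree_le_of_dvd
    (X_pow_dvd_det_of_dvd_vecMul S hp (truncv_zero_eq_zero_iff.1 htr)) hS
  rw [natDegree_X_pow] at this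
  omega

theorem exists_linearIndependent_ev0 {r : ℕ} (hrk : r ≤ k) :
    ∃ p : Fin r → Fin k → F[X], LinearIndependent F (ev0 ∘ p) := by
  refine ⟨fun s => Pi.single (Fin.castLE hrk s) 1, ?_⟩
  have : ev0 ∘ (fun s => Pi.single (Fin.castLE hrk s) (1 : F[X])) =
      Pi.basisFun F (Fin k) ∘ Fin.castLE hrk := by
    ext s l
    simp [Pi.single_apply, apply_ite]
  rw [this]
  exact (Pi.basisFun F _).linearIndependent.comp _ (Fin.castLE_injective hrk)

theorem exists_ncard_gsupp_truncv_lt {G : Matrix (Fin k) (Fin n) F[X]} {j : ℕ}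
    (hj : ∀ p : Fin k → F[X], ev0 p ≠ 0 → truncv 0 j (p ᵥ* G) ≠ 0) {r : ℕ}
    {p : Fin (r + 1) → Fin k → F[X]} (hp : LinearIndependent F (ev0 ∘ p)) :
    ∃ p' : Fin r → Fin k → F[X], LinearIndependent F (ev0 ∘ p') ∧
      (gsupp fun s => truncv 0 j (p' s ᵥ* G)).ncard <
        (gsupp fun s => truncv 0 j (p s ᵥ* G)).ncard := by
  let coeffAt (q : Fin n × ℕ) : (Fin k → F[X]) →ₗ[F] F :=
    lcoeff F q.2 ∘ₗ LinearMap.proj q.1 ∘ₗ G.vecMulLinear.restrictScalars F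
  obtain ⟨ℓ, hℓ⟩ := Function.ne_iff.1 (hj (p 0) (hp.ne_zero 0))
  obtain ⟨i, hi⟩ : ∃ i, (truncv 0 j (p 0 ᵥ* G) ℓ).coeff i ≠ 0 := by
    simpa [Polynomial.ext_iff] using hℓ
  have hq₀ : (ℓ, i) ∈ gsupp fun s => truncv 0 j (p s ᵥ* G) := ⟨0, hi⟩
  have mem_iff {r : ℕ} (d : Fin r → Fin k → F[X]) (q : Fin n × ℕ) :
      q ∈ (gsupp fun s => truncv 0 j (d s ᵥ* G)) ↔ q.2 ≤ j ∧ ∃ s, coeffAt q (d s) ≠ 0 := by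
    rw [mem_gsupp_truncv]; rfl
  obtain ⟨-, s₀, hs₀⟩ := (mem_iff p _).1 hq₀
  obtain ⟨p', hp', hker⟩ := LinearIndependent.exists_comp_mem_span_inf_ker (M := Fin k → F[X])
    (N := Fin k → F) ev0 (coeffAt (ℓ, i)) hp hs₀
  refine ⟨p', hp', Set.ncard_lt_ncard ((Set.ssubset_iff_of_subset ?_).2 ⟨_, hq₀, ?_⟩)
    (gsupp_finite _)⟩
  · intro q hq
    obtain ⟨hqj, s, hs⟩ := (mem_iff p' q).1 hq
    refine (mem_iff p q).2 ⟨hqj, ?_⟩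
    by_contra! h
    exact hs (Submodule.span_le (p := LinearMap.ker (coeffAt q)).2
      (Set.range_subset_iff.2 h) (hker s).1)
  · rintro hq
    obtain ⟨-, s, hs⟩ := (mem_iff p' _).1 hq
    exact hs (hker s).2

theorem gcdJ_le_ncard (G : Matrix (Fin k) (Fin n) F[X]) {r j : ℕ}
    {p : Fin r → Fin k → F[X]} (hp : LinearIndependent F (ev0 ∘ p)) :
    gcdJ G r j ≤ (gsupp fun s => truncv 0 j (p s ᵥ* G)).ncard :=
  Nat.sInf_le ⟨p, hp, rfl⟩

theorem exists_gcdJ_eq_ncard (G : Matrix (Fin k) (Fin n) F[X]) {r : ℕ} (hrk : r ≤ k)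
    (j : ℕ) : ∃ p : Fin r → Fin k → F[X], LinearIndependent F (ev0 ∘ p) ∧
      gcdJ G r j = (gsupp fun s => truncv 0 j (p s ᵥ* G)).ncard := by
  obtain ⟨p, hp⟩ := exists_linearIndependent_ev0 (F := F) hrk
  exact Nat.sInf_mem (s := {m | ∃ p : Fin r → Fin k → F[X], LinearIndependent F (ev0 ∘ p) ∧
    m = (gsupp fun s => truncv 0 j (p s ᵥ* G)).ncard}) ⟨_, p, hp, rfl⟩

theorem gcdJ_lt_gcdJ_succ (G : Matrix (Fin k) (Fin n) F[X]) {r j : ℕ} (hrk : r + 1 ≤ k)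
    (hj : ∀ p : Fin k → F[X], ev0 p ≠ 0 → truncv 0 j (p ᵥ* G) ≠ 0) :
    gcdJ G r j < gcdJ G (r + 1) j := by
  obtain ⟨p, hp, hpG⟩ := exists_gcdJ_eq_ncard G hrk j
  obtain ⟨p', hp', hlt⟩ := exists_ncard_gsupp_truncv_lt hj hp
  exact hpG ▸ (gcdJ_le_ncard G hp').trans_lt hlt

theorem gcdJ_mono (G : Matrix (Fin k) (Fin n) F[X]) {r : ℕ} (hrk : r ≤ k) :
    Monotone (gcdJ G r) := fun j j' hjj => by
  obtain ⟨p, hp, hpG⟩ := exists_gcdJ_eq_ncard G hrk j'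
  exact hpG ▸ (gcdJ_le_ncard G hp).trans
    (Set.ncard_le_ncard (gsupp_truncv_mono _ hjj) (gsupp_finite _))

theorem bddAbove_range_gcdJ (G : Matrix (Fin k) (Fin n) F[X]) {r : ℕ} (hrk : r ≤ k) :
    BddAbove (Set.range (gcdJ G r)) := by
  obtain ⟨p, hp⟩ := exists_linearIndependent_ev0 (F := F) hrk
  refine ⟨(gsupp fun s => p s ᵥ* G).ncard, Set.forall_mem_range.2 fun j => ?_⟩
  exact (gcdJ_le_ncard G hp).trans
    (Set.ncard_le_ncard (gsupp_truncv_subset _ j) (gsupp_finite _))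

theorem eventually_gcdJ_eq_gcdLim (G : Matrix (Fin k) (Fin n) F[X]) {r : ℕ} (hrk : r ≤ k) :
    ∀ᶠ j in atTop, gcdJ G r j = gcdLim G r := by
  have hlim := tendsto_atTop_ciSup (gcdJ_mono G hrk) (bddAbove_range_gcdJ G hrk)
  rw [gcdLim, hlim.limsup_eq]
  rwa [nhds_discrete, tendsto_pure] at hlim

end ConvCode

open ConvCode
theorem gcdLim_strict_mono_general {F : Type*} [Field F] {n k : ℕ}
    (C : Submodule (Polynomial F) (Fin n → Polynomial F))
    (G : Matrix (Fin k) (Fin n) (Polynomial F)) (hG : IsGenMat C G) :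
    ∀ r : ℕ, 1 ≤ r → r < k → gcdLim G r < gcdLim G (r + 1) := by
  intro r _ hrk
  obtain ⟨J, hJ⟩ := exists_truncv_vecMul_ne_zero hG.1
  obtain ⟨j, hjr, hjr₁, hjJ⟩ := ((eventually_gcdJ_eq_gcdLim G hrk.le).and
    ((eventually_gcdJ_eq_gcdLim G hrk).and (Filter.eventually_ge_atTop J))).exists
  rw [← hjr, ← hjr₁]
  exact gcdJ_lt_gcdJ_succ G hrk (hJ j hjJ)

/-- the `r`-generalized column distances are strictly increasing in `r`. -/
theorem gcdLim_strict_mono {F : Type*} [Field F] [Fintype F] {n k : ℕ}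
    (C : Submodule (Polynomial F) (Fin n → Polynomial F))
    (hk : 1 ≤ k) (hkn : k ≤ n)
    (G : Matrix (Fin k) (Fin n) (Polynomial F)) (hG : IsGenMat C G) :
    ∀ r : ℕ, 1 ≤ r → r < k → gcdLim G r < gcdLim G (r + 1) :=
  gcdLim_strict_mono_general C G hG
end
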